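/- arXiv:2410.19012 — 2 statements merged into one kernel-verified Lean document; each statement's English description precedes it below -/
import Mathlib

section
/- Let α > 1, ε ≥ 0, and let M be a mechanism from D^n to probability distributions on R satisfying the single-step Rényi-DP consequence: for every pair of neighboring datasets d̃, d̃' and every event E ⊆ R, Pr[M(d̃) ∈ E] ≤ e^{ε(1−1/α)}·(Pr[M(d̃') ∈ E])^{1−1/α}. Then for any datasets d, d' with Hamming distance |d−d'|_H = Δ, if α ≥ Δ+1, then for any event E ⊆ R, Pr[M(d) ∈ E] ≤ e^{(α−1)ε}·(Pr[M(d') ∈ E])^{1/e}. -/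
/-!
Along a Hamming path `d = d₀, d₁, …, d_Δ = d'` the single-step bound
`P(dᵢ) ≤ K · P(dᵢ₊₁)^c`, with `K = e^{εc} ≥ 1` and `c = 1 - 1/α ≤ 1`, composes to
`P(d) ≤ K^Δ · P(d')^{c^Δ}`. Since `Δ ≤ α - 1`, the constant is at most `e^{(α-1)ε}`, and
`log c ≥ 1 - 1/c = -1/(α-1)` gives `c^Δ ≥ e^{-1}`, which is enough because `P(d') ≤ 1`.
-/

open MeasureTheory
open scoped ENNReal

section Hamming

variable {ι : Type*} [Fintype ι] {β : ι → Type*} [∀ i, DecidableEq (β i)]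

lemma hammingDist_update_left [DecidableEq ι] {x y : ∀ i, β i} {i : ι} (h : x i ≠ y i) :
    hammingDist x (Function.update x i (y i)) = 1 ∧
      hammingDist (Function.update x i (y i)) y + 1 = hammingDist x y := by
  have hi : i ∈ Finset.univ.filter fun j => x j ≠ y j := by simp [h]
  constructor
  · rw [hammingDist, Finset.card_eq_one]
    refine ⟨i, Finset.ext fun j => ?_⟩
    rcases eq_or_ne j i with rfl | hj <;> simp [*]
  · rw [hammingDist, hammingDist, ← Finset.card_erase_add_one hi]
    congr 2
    ext j
    rcases eq_or_ne j i with rfl | hj <;> simp [*]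

lemma exists_hammingDist_eq_one_of_hammingDist_eq_succ {x y : ∀ i, β i} {k : ℕ}
    (h : hammingDist x y = k + 1) :
    ∃ z, hammingDist x z = 1 ∧ hammingDist z y = k := by
  classical
  obtain ⟨i, hi⟩ : ∃ i, x i ≠ y i := by
    by_contra! hxy
    simp [funext hxy] at h
  obtain ⟨h₁, h₂⟩ := hammingDist_update_left hi
  exact ⟨_, h₁, by omega⟩

lemma le_pow_mul_rpow_pow_of_hammingDist_eq (p : (∀ i, β i) → ℝ≥0∞) {K : ℝ≥0∞} {c : ℝ} (hK : 1 ≤ K) (hc₀ : 0 ≤ c) (hc₁ : c ≤ 1)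
    (hstep : ∀ x y, hammingDist x y = 1 → p x ≤ K * p y ^ c) :
    ∀ (k : ℕ) (x y : ∀ i, β i), hammingDist x y = k → p x ≤ K ^ k * p y ^ (c ^ k) := by
  intro k
  induction k with
  | zero =>
    intro x y h
    simp [hammingDist_eq_zero.mp h]
  | succ k ih =>
    intro x y h
    obtain ⟨z, hxz, hzy⟩ := exists_hammingDist_eq_one_of_hammingDist_eq_succ h
    have hKk : (K ^ k) ^ c ≤ K ^ k := by
      simpa using ENNReal.rpow_le_rpow_of_exponent_le (one_le_pow₀ hK) hc₁
    calc p x ≤ K * p z ^ c := hstep x z hxz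
      _ ≤ K * (K ^ k * p y ^ (c ^ k)) ^ c := by gcongr; exact ih z y hzy
      _ = K * ((K ^ k) ^ c * p y ^ (c ^ (k + 1))) := by
        rw [ENNReal.mul_rpow_of_nonneg _ _ hc₀, ← ENNReal.rpow_mul, pow_succ]
      _ ≤ K ^ (k + 1) * p y ^ (c ^ (k + 1)) := by
        rw [pow_succ' K, mul_assoc]; gcongr

end Hamming

lemma Real.exp_neg_one_le_one_sub_inv_pow {α : ℝ} {k : ℕ} (hα : 1 < α) (hk : (k : ℝ) + 1 ≤ α) :
    Real.exp (-1) ≤ (1 - 1 / α) ^ k := by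
  have hα₀ : α ≠ 0 := by positivity
  have hα₁ : 0 < α - 1 := by linarith
  have hc₀ : 0 < 1 - 1 / α := by
    rw [sub_pos, div_lt_one (by linarith)]; exact hα
  have hlog : -1 / (α - 1) ≤ Real.log (1 - 1 / α) := by
    convert Real.one_sub_inv_le_log_of_pos hc₀ using 1
    field_simp
    ring
  rw [← Real.exp_log (pow_pos hc₀ k), Real.log_pow, Real.exp_le_exp]
  calc -1 ≤ (k : ℝ) * (-1 / (α - 1)) := by
        rw [mul_div_assoc', le_div_iff₀ hα₁]; linarith
    _ ≤ k * Real.log (1 - 1 / α) := by gcongr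

/-- group privacy for Rényi DP, Proposition 2.4, second part.
Under the single-step Rényi-DP consequence, for datasets at Hamming distance `Δ` with
`α ≥ Δ + 1`, `Pr[M(d) ∈ E] ≤ e^{(α-1)ε}·(Pr[M(d') ∈ E])^{1/e}`. -/
theorem stmt_4 {D R : Type*} [DecidableEq D] [MeasurableSpace R] {n : ℕ}
    (M : (Fin n → D) → Measure R)
    (hprob : ∀ d, IsProbabilityMeasure (M d))
    (α ε : ℝ) (hα : 1 < α) (hε : 0 ≤ ε)
    (hRDP : ∀ d d' : Fin n → D, hammingDist d d' = 1 →
      ∀ E : Set R, M d E ≤ ENNReal.ofReal (Real.exp (ε * (1 - 1/α))) * (M d' E) ^ (1 - 1/α))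
    (Δ : ℕ) (d d' : Fin n → D) (hdist : hammingDist d d' = Δ)
    (hαΔ : (Δ : ℝ) + 1 ≤ α) :
    ∀ E : Set R,
      M d E ≤ ENNReal.ofReal (Real.exp ((α - 1) * ε)) * (M d' E) ^ (1 / Real.exp 1) := by
  intro E
  have hinv : 0 < 1 / α ∧ 1 / α < 1 := ⟨by positivity, (div_lt_one (by linarith)).mpr hα⟩
  have hK : 1 ≤ ENNReal.ofReal (Real.exp (ε * (1 - 1 / α))) :=
    ENNReal.one_le_ofReal.mpr (Real.one_le_exp (mul_nonneg hε (by linarith)))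
  have hgroup := le_pow_mul_rpow_pow_of_hammingDist_eq (fun x => M x E) hK (by linarith)
    (by linarith) (fun x y h => hRDP x y h E) Δ d d' hdist
  have hconst : ε * (1 - 1 / α) * Δ ≤ (α - 1) * ε := by
    nlinarith [mul_nonneg hε (mul_nonneg hinv.1.le (Nat.cast_nonneg Δ))]
  refine hgroup.trans (mul_le_mul' ?_ ?_)
  · rw [← ENNReal.ofReal_pow (Real.exp_nonneg _), ← Real.exp_nat_mul, mul_comm]
    exact ENNReal.ofReal_le_ofReal (Real.exp_le_exp.mpr hconst)
  · refine ENNReal.rpow_le_rpow_of_exponent_ge prob_le_one ?_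
    rw [one_div, ← Real.exp_neg]
    exact Real.exp_neg_one_le_one_sub_inv_pow hα hαΔ
end

section
/- (Reduction from hyperparameter tuning to repetition) Let K ≥ 1 be an integer and let M : D^n × [K] → probability distributions on pairs (o,v) ∈ R_o × ℝ be such that for each k ∈ [K] the mechanism d ↦ M(d,k) is ε-differentially private. Define the mechanism M' that on input d samples k uniformly at random from [K] and outputs a draw from M(d,k). Then: (i) M' is ε-differentially private; and (ii) for every dataset d, Pr[val(M'(d)) ≥ max_{k∈[K]} Median(val(M(d,k)))] ≥ 1/(2K). -/
open MeasureTheory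
open scoped ENNReal

/-- The median of the value (second coordinate) of a distribution on pairs `(o, v)`:
`Median(val(μ)) = sup {z : Pr_{(o,v) ∼ μ}[v ≥ z] ≥ 1/2}`. -/
noncomputable def medianVal {Ro : Type*} [MeasurableSpace Ro]
    (μ : Measure (Ro × ℝ)) : ℝ :=
  sSup {z : ℝ | (1 : ℝ≥0∞) / 2 ≤ μ {p | z ≤ p.2}}

/-!
Privacy is inherited by mixtures: the DP inequality holds for each component, hence for any
weighted sum of them. For utility, the probability that the value is at least a median is at
least `1/2`, because the tail `z ↦ Pr[v ≥ z]` is left-continuous; and the uniform mixture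
puts mass `1/K` on a component `k₀` whose median is the largest one.
-/

open Filter Set Topology

section Superlevel

variable {α : Type*} [MeasurableSpace α] (μ : Measure α) {f : α → ℝ}

theorem tendsto_measure_setOf_le_atBot :
    Tendsto (fun z => μ {x | z ≤ f x}) atBot (𝓝 (μ univ)) := by
  have h := tendsto_measure_iUnion_atBot (μ := μ) (s := fun z : ℝ => {x | z ≤ f x})
    fun _ _ hzw _ hx => hzw.trans hx
  rwa [iUnion_eq_univ_iff.mpr fun x => ⟨f x, by simp⟩] at h

theorem tendsto_measure_setOf_le_nhdsLT [IsFiniteMeasure μ] (hf : Measurable f) (q : ℝ) :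
    Tendsto (fun z => μ {x | z ≤ f x}) (𝓝[<] q) (𝓝 (μ {x | q ≤ f x})) := by
  -- continuity from above along `z ↑ q`, phrased in `ℝᵒᵈ` where it becomes `z ↓ q`
  have h := tendsto_measure_biInter_gt (μ := μ) (ι := ℝᵒᵈ)
    (s := fun z => {x | OrderDual.ofDual z ≤ f x}) (a := OrderDual.toDual q)
    (fun _ _ => (hf measurableSet_Ici).nullMeasurableSet)
    (fun _ _ _ hij _ hx => (OrderDual.ofDual_le_ofDual.mpr hij).trans hx)
    ⟨OrderDual.toDual (q - 1), OrderDual.toDual_lt_toDual.mpr (by linarith), measure_ne_top _ _⟩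
  have hq : ⋂ r > OrderDual.toDual q, {x | OrderDual.ofDual r ≤ f x} = {x | q ≤ f x} := by
    ext x
    simp only [gt_iff_lt, mem_iInter, mem_ofPred_eq, OrderDual.forall,
      OrderDual.toDual_lt_toDual, OrderDual.ofDual_toDual]
    exact forall_lt_imp_le_iff_le_of_dense
  rwa [hq] at h

theorem le_measure_setOf_sSup_le [IsFiniteMeasure μ] (hf : Measurable f) {t : ℝ≥0∞}
    (ht : t < μ univ) :
    t ≤ μ {x | sSup {z | t ≤ μ {x | z ≤ f x}} ≤ f x} := by
  -- `S` need not be bounded above: then `sSup S = 0`, and the argument below still applies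
  set S := {z | t ≤ μ {x | z ≤ f x}}
  have hne : S.Nonempty :=
    ((tendsto_measure_setOf_le_atBot μ (f := f)).eventually (eventually_ge_nhds ht)).exists
  refine ge_of_tendsto (tendsto_measure_setOf_le_nhdsLT μ hf _) ?_
  filter_upwards [self_mem_nhdsWithin] with z hz
  obtain ⟨w, hwS, hzw⟩ := exists_lt_of_lt_csSup hne hz
  exact hwS.trans (measure_mono fun _ hx => hzw.le.trans hx)

end Superlevel

theorem half_le_measure_medianVal_le {Ro : Type*} [MeasurableSpace Ro] (μ : Measure (Ro × ℝ))
    [IsProbabilityMeasure μ] : 1 / 2 ≤ μ {p | medianVal μ ≤ p.2} :=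
  le_measure_setOf_sSup_le μ measurable_snd (by simp)

namespace MeasureTheory.Measure

variable {α ι : Type*} [MeasurableSpace α] (s : Finset ι) (w : ι → ℝ≥0∞)

theorem finsetSum_smul_apply_le_mul {μ ν : ι → Measure α} {c : ℝ≥0∞} {S : Set α}
    (h : ∀ i ∈ s, μ i S ≤ c * ν i S) :
    (∑ i ∈ s, w i • μ i) S ≤ c * (∑ i ∈ s, w i • ν i) S := by
  simp only [finsetSum_apply, smul_apply, smul_eq_mul, Finset.mul_sum]
  exact Finset.sum_le_sum fun i hi => (mul_le_mul_right (h i hi) _).trans_eq (mul_left_comm _ _ _)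

theorem smul_apply_le_finsetSum_smul_apply {μ : ι → Measure α} {i : ι} (hi : i ∈ s)
    (S : Set α) : w i * μ i S ≤ (∑ j ∈ s, w j • μ j) S := by
  simp only [finsetSum_apply, smul_apply, smul_eq_mul]
  exact Finset.single_le_sum (f := fun j => w j * μ j S) (fun _ _ => zero_le) hi

end MeasureTheory.Measure

theorem stmt_19_general {D Ro : Type*} [DecidableEq D] [MeasurableSpace Ro] {n K : ℕ}
    (hK : 1 ≤ K)
    (M : (Fin n → D) → Fin K → Measure (Ro × ℝ))
    [∀ d k, IsProbabilityMeasure (M d k)]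
    (ε : ℝ)
    (hDP : ∀ k : Fin K, ∀ d d' : Fin n → D, hammingDist d d' = 1 →
      ∀ S : Set (Ro × ℝ), M d k S ≤ ENNReal.ofReal (Real.exp ε) * M d' k S) :
    (∀ d d' : Fin n → D, hammingDist d d' = 1 →
      ∀ S : Set (Ro × ℝ),
        (∑ k : Fin K, ((K : ℝ≥0∞))⁻¹ • M d k) S ≤
          ENNReal.ofReal (Real.exp ε) * (∑ k : Fin K, ((K : ℝ≥0∞))⁻¹ • M d' k) S) ∧
    (∀ d : Fin n → D,
      (1 : ℝ≥0∞) / (2 * K) ≤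
        (∑ k : Fin K, ((K : ℝ≥0∞))⁻¹ • M d k)
          {p | (⨆ k : Fin K, medianVal (M d k)) ≤ p.2}) := by
  refine ⟨fun d d' hdd S => Measure.finsetSum_smul_apply_le_mul _ _ fun k _ => hDP k d d' hdd S,
    fun d => ?_⟩
  have : Nonempty (Fin K) := ⟨⟨0, hK⟩⟩
  obtain ⟨k₀, hk₀⟩ := exists_eq_ciSup_of_finite (f := fun k => medianVal (M d k))
  rw [← hk₀]
  calc (1 : ℝ≥0∞) / (2 * K) = (K : ℝ≥0∞)⁻¹ * (1 / 2) := by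
        rw [one_div, one_div, ENNReal.mul_inv (by simp) (by simp), mul_comm]
    _ ≤ (K : ℝ≥0∞)⁻¹ * M d k₀ {p | medianVal (M d k₀) ≤ p.2} := by
        gcongr; exact half_le_measure_medianVal_le _
    _ ≤ _ := Measure.smul_apply_le_finsetSum_smul_apply _ _ (Finset.mem_univ k₀) _

/-- reduction from hyperparameter tuning to repetition, Proposition 2.5
with `H = [K]` and uniform `μ_H`. If `M(·, k)` is `ε`-DP for each `k ∈ [K]`, then the
mechanism `M'` that picks `k` uniformly from `[K]` and outputs a draw from `M(d, k)` is
`ε`-DP, and for every `d`,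
`Pr[val(M'(d)) ≥ max_{k ∈ [K]} Median(val(M(d,k)))] ≥ 1/(2K)`. -/
theorem stmt_19 {D Ro : Type*} [DecidableEq D] [MeasurableSpace Ro] {n K : ℕ}
    (hK : 1 ≤ K)
    (M : (Fin n → D) → Fin K → Measure (Ro × ℝ))
    [∀ d k, IsProbabilityMeasure (M d k)]
    (ε : ℝ) (hε : 0 ≤ ε)
    (hDP : ∀ k : Fin K, ∀ d d' : Fin n → D, hammingDist d d' = 1 →
      ∀ S : Set (Ro × ℝ), M d k S ≤ ENNReal.ofReal (Real.exp ε) * M d' k S) :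
    (∀ d d' : Fin n → D, hammingDist d d' = 1 →
      ∀ S : Set (Ro × ℝ),
        (∑ k : Fin K, ((K : ℝ≥0∞))⁻¹ • M d k) S ≤
          ENNReal.ofReal (Real.exp ε) * (∑ k : Fin K, ((K : ℝ≥0∞))⁻¹ • M d' k) S) ∧
    (∀ d : Fin n → D,
      (1 : ℝ≥0∞) / (2 * K) ≤
        (∑ k : Fin K, ((K : ℝ≥0∞))⁻¹ • M d k)
          {p | (⨆ k : Fin K, medianVal (M d k)) ≤ p.2}) :=
  stmt_19_general hK M ε hDP
end
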